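/- (Weyl-type inequality for λ's.) Let A and B be admissible pseudo-Hermitian n×n matrices, and suppose C = A + B is also admissible. Denote by λ_p(·) ≥ … ≥ λ_1(·) > μ_1(·) ≥ … ≥ μ_q(·) the eigenvalues of each of A, B, C. Then for each 1 ≤ k ≤ p one has λ_k(A+B) ≥ λ_k(A) + λ_1(B). -/

import Mathlib

/-!
A Courant–Fischer argument for the indefinite form. If `M = U Λ U⁻¹` with `U J Uᴴ = J` and
`y = U⁻¹ x`, then `⟨M x, x⟩ - c ⟨x, x⟩ = Σ ± (Λᵢ - c) |yᵢ|²`, the sign being `+` on the first `p`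
coordinates. Pick `x ≠ 0` whose `C`-coordinates live on the eigenvalues `λ_1(C), …, λ_k(C)` and
whose `A`-coordinates avoid `λ_1(A), …, λ_{k-1}(A)`; the dimensions `k` and `n - k + 1` force
such an `x`. Then `⟨x, x⟩ > 0` and `⟨C x, x⟩ ≤ λ_k(C) ⟨x, x⟩`, while `⟨A x, x⟩ ≥ λ_k(A) ⟨x, x⟩`
and `⟨B x, x⟩ ≥ λ_1(B) ⟨x, x⟩` because every `μ` lies below `λ_1 ≤ λ_k` and enters with a minus
sign. Adding and dividing by `⟨x, x⟩` gives the claim.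
-/

open Matrix

/-- The signature matrix `J = diag(1,…,1,−1,…,−1)` with `p` ones and `q` minus-ones. -/
noncomputable def Jmat (p q : ℕ) : Matrix (Fin (p + q)) (Fin (p + q)) ℂ :=
  Matrix.diagonal (fun i => if (i : ℕ) < p then 1 else -1)

/-- The indefinite pairing `⟨z,w⟩ = Σ_{i<p} z_i conj(w_i) − Σ_{i≥p} z_i conj(w_i)`;
equivalently `w† · z` where `x† = (J conj(x))ᵀ`. -/
noncomputable def pairing (p q : ℕ) (z w : Fin (p + q) → ℂ) : ℂ :=
  ∑ i : Fin (p + q),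
    (if (i : ℕ) < p then z i * (starRingEnd ℂ) (w i) else -(z i * (starRingEnd ℂ) (w i)))

/-- The diagonal entries of `Λ = diag(λ_p, …, λ_1, μ_1, …, μ_q)`, where `lam` and `mu`
are 0-indexed: `lam i = λ_{i+1}` and `mu j = μ_{j+1}`. -/
noncomputable def diagEntries (p q : ℕ) (lam : Fin p → ℝ) (mu : Fin q → ℝ) :
    Fin (p + q) → ℂ :=
  fun i =>
    if h : (i : ℕ) < p then ((lam ⟨p - 1 - (i : ℕ), by omega⟩ : ℝ) : ℂ)
    else ((mu ⟨(i : ℕ) - p, by have := i.isLt; omega⟩ : ℝ) : ℂ)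

/-- `A` is an admissible pseudo-Hermitian matrix with (real) eigenvalues
`λ_p ≥ … ≥ λ_1 > μ_1 ≥ … ≥ μ_q`, recorded 0-indexed as `lam i = λ_{i+1}` (so `lam` is
monotone) and `mu j = μ_{j+1}` (so `mu` is antitone), with `λ_1 > μ_1`, and
`A = U Λ U⁻¹` for some invertible `U` with `U J Uᴴ = J`. -/
def IsAdmissible (p q : ℕ) (hp : 0 < p) (hq : 0 < q)
    (A : Matrix (Fin (p + q)) (Fin (p + q)) ℂ)
    (lam : Fin p → ℝ) (mu : Fin q → ℝ) : Prop :=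
  A * Jmat p q = Jmat p q * A.conjTranspose ∧
  Monotone lam ∧ Antitone mu ∧ mu ⟨0, hq⟩ < lam ⟨0, hp⟩ ∧
  ∃ U : Matrix (Fin (p + q)) (Fin (p + q)) ℂ,
    IsUnit U ∧ U * Jmat p q * U.conjTranspose = Jmat p q ∧
    A = U * Matrix.diagonal (diagEntries p q lam mu) * U⁻¹

/-- The Rayleigh ratio `R_A(x) = (x† A x)/(x† x)`, as a real number (for admissible
pseudo-Hermitian `A` both `x† A x` and `x† x` are real). -/
noncomputable def rayleigh (p q : ℕ) (A : Matrix (Fin (p + q)) (Fin (p + q)) ℂ)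
    (x : Fin (p + q) → ℂ) : ℝ :=
  (pairing p q (A.mulVec x) x).re / (pairing p q x x).re

theorem Matrix.mulVec_nonsing_inv_mulVec {n R : Type*} [Fintype n] [DecidableEq n] [CommRing R]
    {U : Matrix n n R} (hU : IsUnit U) (x : n → R) : U *ᵥ (U⁻¹ *ᵥ x) = x := by
  rw [mulVec_mulVec, mul_nonsing_inv U ((isUnit_iff_isUnit_det U).mp hU), one_mulVec]

theorem Matrix.exists_ne_zero_mulVec_apply_eq_zero {K ι : Type*} [Field K] [Fintype ι]
    [DecidableEq ι] (P Q : Matrix ι ι K) {S T : Finset ι}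
    (hST : S.card + T.card < Fintype.card ι) :
    ∃ x : ι → K, x ≠ 0 ∧ (∀ i ∈ S, (P *ᵥ x) i = 0) ∧ ∀ i ∈ T, (Q *ᵥ x) i = 0 := by
  let f : (ι → K) →ₗ[K] (S → K) × (T → K) :=
    (LinearMap.funLeft K K Subtype.val ∘ₗ P.mulVecLin).prod
      (LinearMap.funLeft K K Subtype.val ∘ₗ Q.mulVecLin)
  have hf : LinearMap.ker f ≠ ⊥ := LinearMap.ker_ne_bot_of_finrank_lt <| by
    simpa [Module.finrank_prod, Module.finrank_fintype_fun_eq_card] using hST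
  obtain ⟨x, hx, hx0⟩ := Submodule.exists_mem_ne_zero_of_ne_bot hf
  exact ⟨x, hx0, fun i hi => congrFun (congrArg Prod.fst hx) ⟨i, hi⟩,
    fun i hi => congrFun (congrArg Prod.snd hx) ⟨i, hi⟩⟩

section Pairing

variable {p q : ℕ}

theorem Jmat_mul_self : Jmat p q * Jmat p q = 1 := by
  rw [Jmat, diagonal_mul_diagonal, ← diagonal_one]
  congr 1
  ext i
  split_ifs <;> norm_num

theorem pairing_eq_dotProduct (z w : Fin (p + q) → ℂ) :
    pairing p q z w = star w ⬝ᵥ (Jmat p q *ᵥ z) := by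
  simp only [pairing, Jmat, dotProduct, mulVec_diagonal]
  refine Finset.sum_congr rfl fun i _ => ?_
  split_ifs <;> simp [mul_comm]

theorem pairing_add_left (u v w : Fin (p + q) → ℂ) :
    pairing p q (u + v) w = pairing p q u w + pairing p q v w := by
  simp only [pairing_eq_dotProduct, mulVec_add, dotProduct_add]

theorem conjTranspose_mul_Jmat_mul_self {U : Matrix (Fin (p + q)) (Fin (p + q)) ℂ}
    (hU : U * Jmat p q * Uᴴ = Jmat p q) : Uᴴ * Jmat p q * U = Jmat p q := by
  have h : Jmat p q * U * Jmat p q * Uᴴ = 1 := by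
    rw [Matrix.mul_assoc _ (Jmat p q), Matrix.mul_assoc (Jmat p q), ← Matrix.mul_assoc U, hU,
      Jmat_mul_self]
  calc Uᴴ * Jmat p q * U = Uᴴ * (Jmat p q * U * Jmat p q) * Jmat p q := by
        simp only [Matrix.mul_assoc, Jmat_mul_self, Matrix.mul_one]
    _ = Jmat p q := by rw [mul_eq_one_comm.mp h, Matrix.one_mul]

theorem pairing_mulVec_mulVec {U : Matrix (Fin (p + q)) (Fin (p + q)) ℂ}
    (hU : U * Jmat p q * Uᴴ = Jmat p q) (z w : Fin (p + q) → ℂ) :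
    pairing p q (U *ᵥ z) (U *ᵥ w) = pairing p q z w := by
  rw [pairing_eq_dotProduct, pairing_eq_dotProduct, star_mulVec, mulVec_mulVec,
    ← dotProduct_mulVec, mulVec_mulVec, ← Matrix.mul_assoc, conjTranspose_mul_Jmat_mul_self hU]

theorem re_pairing_diagonal_sub (d : Fin (p + q) → ℝ) (c : ℝ) (y : Fin (p + q) → ℂ) :
    (pairing p q (diagonal (fun i => (d i : ℂ)) *ᵥ y) y).re - c * (pairing p q y y).re =
      ∑ i : Fin (p + q), (if (i : ℕ) < p then 1 else -1) * (d i - c) * Complex.normSq (y i) := by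
  simp only [pairing, Complex.re_sum, mulVec_diagonal, Finset.mul_sum, ← Finset.sum_sub_distrib]
  refine Finset.sum_congr rfl fun i _ => ?_
  split_ifs <;> simp [Complex.mul_conj, mul_assoc, ← Complex.ofReal_mul] <;> ring

theorem re_pairing_self_pos {y : Fin (p + q) → ℂ} (hy : y ≠ 0)
    (hyp : ∀ i : Fin (p + q), p ≤ (i : ℕ) → y i = 0) : 0 < (pairing p q y y).re := by
  obtain ⟨i₀, hi₀⟩ := Function.ne_iff.mp hy
  have hi₀p : (i₀ : ℕ) < p := by
    by_contra h
    exact hi₀ (hyp i₀ (not_lt.mp h))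
  simp only [pairing, Complex.re_sum]
  refine Finset.sum_pos' (fun i _ => ?_) ⟨i₀, Finset.mem_univ _, ?_⟩
  · by_cases hi : (i : ℕ) < p
    · simp [hi, Complex.mul_conj, Complex.normSq_nonneg]
    · simp [hi, hyp i (not_lt.mp hi)]
  · simpa [hi₀p, Complex.mul_conj] using Complex.normSq_pos.mpr hi₀

theorem pairing_inv_mulVec_inv_mulVec {U : Matrix (Fin (p + q)) (Fin (p + q)) ℂ} (hU : IsUnit U)
    (hUJ : U * Jmat p q * Uᴴ = Jmat p q) (x : Fin (p + q) → ℂ) :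
    pairing p q (U⁻¹ *ᵥ x) (U⁻¹ *ᵥ x) = pairing p q x x := by
  conv_rhs => rw [← mulVec_nonsing_inv_mulVec hU x, pairing_mulVec_mulVec hUJ]

theorem re_pairing_conj_diagonal_sub {U : Matrix (Fin (p + q)) (Fin (p + q)) ℂ} (hU : IsUnit U)
    (hUJ : U * Jmat p q * Uᴴ = Jmat p q) (d : Fin (p + q) → ℝ) (c : ℝ) (x : Fin (p + q) → ℂ) :
    (pairing p q ((U * diagonal (fun i => (d i : ℂ)) * U⁻¹) *ᵥ x) x).re
        - c * (pairing p q x x).re =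
      ∑ i : Fin (p + q),
        (if (i : ℕ) < p then 1 else -1) * (d i - c) * Complex.normSq ((U⁻¹ *ᵥ x) i) := by
  have hx := mulVec_nonsing_inv_mulVec hU x
  set y := U⁻¹ *ᵥ x
  have hAx : (U * diagonal (fun i => (d i : ℂ)) * U⁻¹) *ᵥ x
      = U *ᵥ (diagonal (fun i => (d i : ℂ)) *ᵥ y) := by
    simp only [y, mulVec_mulVec, Matrix.mul_assoc]
  rw [hAx, ← hx, pairing_mulVec_mulVec hUJ, pairing_mulVec_mulVec hUJ]
  exact re_pairing_diagonal_sub d c y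

theorem re_pairing_self_pos_of_inv_mulVec {W : Matrix (Fin (p + q)) (Fin (p + q)) ℂ}
    (hW : IsUnit W) (hWJ : W * Jmat p q * Wᴴ = Jmat p q) {x : Fin (p + q) → ℂ} (hx : x ≠ 0)
    (hxp : ∀ i : Fin (p + q), p ≤ (i : ℕ) → (W⁻¹ *ᵥ x) i = 0) : 0 < (pairing p q x x).re := by
  rw [← pairing_inv_mulVec_inv_mulVec hW hWJ]
  refine re_pairing_self_pos (fun h => hx ?_) hxp
  rw [← mulVec_nonsing_inv_mulVec hW x, h, mulVec_zero]

end Pairing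

section Eigenvalues

variable {p q : ℕ} {lam : Fin p → ℝ} {mu : Fin q → ℝ}

theorem diagEntries_eq_ofReal_re :
    diagEntries p q lam mu = fun i => ((diagEntries p q lam mu i).re : ℂ) := by
  ext i
  unfold diagEntries
  split_ifs <;> simp

theorem re_diagEntries_of_lt {i : Fin (p + q)} (hi : (i : ℕ) < p) :
    (diagEntries p q lam mu i).re = lam ⟨p - 1 - i, by omega⟩ := by
  simp [diagEntries, hi]

theorem re_diagEntries_of_le {i : Fin (p + q)} (hi : p ≤ (i : ℕ)) :
    (diagEntries p q lam mu i).re = mu ⟨i - p, by omega⟩ := by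
  simp [diagEntries, not_lt.mpr hi]

theorem sign_mul_re_diagEntries_sub_nonneg (hp : 0 < p) (hq : 0 < q) (hlam : Monotone lam)
    (hmu : Antitone mu) (hgap : mu ⟨0, hq⟩ < lam ⟨0, hp⟩) (j : Fin p) {i : Fin (p + q)}
    (hij : (j : ℕ) + i < p ∨ p ≤ (i : ℕ)) :
    0 ≤ (if (i : ℕ) < p then 1 else -1) * ((diagEntries p q lam mu i).re - lam j) := by
  by_cases hi : (i : ℕ) < p
  · have : lam j ≤ lam ⟨p - 1 - i, by omega⟩ := hlam (Fin.mk_le_mk.mpr (by omega))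
    simp [hi, re_diagEntries_of_lt hi, this]
  · have h₁ : mu ⟨i - p, by omega⟩ ≤ mu ⟨0, hq⟩ := hmu (Fin.mk_le_mk.mpr (Nat.zero_le _))
    have h₂ : lam ⟨0, hp⟩ ≤ lam j := hlam (Fin.mk_le_mk.mpr (Nat.zero_le _))
    simp only [hi, if_false, re_diagEntries_of_le (not_lt.mp hi)]
    linarith

theorem sign_mul_re_diagEntries_sub_nonpos (hlam : Monotone lam) (j : Fin p) {i : Fin (p + q)}
    (hi : (i : ℕ) < p) (hij : p ≤ (j : ℕ) + i + 1) :
    (if (i : ℕ) < p then 1 else -1) * ((diagEntries p q lam mu i).re - lam j) ≤ 0 := by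
  have : lam ⟨p - 1 - i, by omega⟩ ≤ lam j := hlam (Fin.mk_le_mk.mpr (by omega))
  simp [hi, re_diagEntries_of_lt hi, this]

end Eigenvalues

section Rayleigh

variable {p q : ℕ} {lam : Fin p → ℝ} {mu : Fin q → ℝ} {U A : Matrix (Fin (p + q)) (Fin (p + q)) ℂ}

theorem lam_mul_re_pairing_self_le (hp : 0 < p) (hq : 0 < q) (hlam : Monotone lam)
    (hmu : Antitone mu) (hgap : mu ⟨0, hq⟩ < lam ⟨0, hp⟩) (hU : IsUnit U)
    (hUJ : U * Jmat p q * Uᴴ = Jmat p q) (hA : A = U * diagonal (diagEntries p q lam mu) * U⁻¹)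
    (j : Fin p) {x : Fin (p + q) → ℂ}
    (hx : ∀ i : Fin (p + q), (i : ℕ) < p → p ≤ (j : ℕ) + i → (U⁻¹ *ᵥ x) i = 0) :
    lam j * (pairing p q x x).re ≤ (pairing p q (A *ᵥ x) x).re := by
  rw [← sub_nonneg, hA, diagEntries_eq_ofReal_re, re_pairing_conj_diagonal_sub hU hUJ]
  refine Finset.sum_nonneg fun i _ => ?_
  by_cases hxi : (U⁻¹ *ᵥ x) i = 0
  · simp [hxi]
  · have hij : (j : ℕ) + i < p ∨ p ≤ (i : ℕ) := by
      by_contra h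
      exact hxi (hx i (by omega) (by omega))
    exact mul_nonneg (sign_mul_re_diagEntries_sub_nonneg hp hq hlam hmu hgap j hij)
      (Complex.normSq_nonneg _)

theorem re_pairing_le_lam_mul_self (hlam : Monotone lam) (hU : IsUnit U)
    (hUJ : U * Jmat p q * Uᴴ = Jmat p q) (hA : A = U * diagonal (diagEntries p q lam mu) * U⁻¹)
    (j : Fin p) {x : Fin (p + q) → ℂ}
    (hx : ∀ i : Fin (p + q), ¬((i : ℕ) < p ∧ p ≤ (j : ℕ) + i + 1) → (U⁻¹ *ᵥ x) i = 0) :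
    (pairing p q (A *ᵥ x) x).re ≤ lam j * (pairing p q x x).re := by
  rw [← sub_nonpos, hA, diagEntries_eq_ofReal_re, re_pairing_conj_diagonal_sub hU hUJ]
  refine Finset.sum_nonpos fun i _ => ?_
  by_cases hxi : (U⁻¹ *ᵥ x) i = 0
  · simp [hxi]
  · obtain ⟨hi, hij⟩ := not_not.mp (mt (hx i) hxi)
    exact mul_nonpos_of_nonpos_of_nonneg (sign_mul_re_diagEntries_sub_nonpos hlam j hi hij)
      (Complex.normSq_nonneg _)

theorem IsAdmissible.lam_zero_mul_re_pairing_self_le {hp : 0 < p} {hq : 0 < q}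
    (hA : IsAdmissible p q hp hq A lam mu) (x : Fin (p + q) → ℂ) :
    lam ⟨0, hp⟩ * (pairing p q x x).re ≤ (pairing p q (A *ᵥ x) x).re := by
  obtain ⟨-, hlam, hmu, hgap, U, hU, hUJ, hUA⟩ := hA
  exact lam_mul_re_pairing_self_le hp hq hlam hmu hgap hU hUJ hUA ⟨0, hp⟩ fun i hi h0 => by
    simp only [zero_add] at h0
    omega

end Rayleigh

/-- Coordinate `i < p` carries `lam (p - 1 - i)`: the first condition makes `P x` live on the
coordinates of `lam 0, …, lam j`, the second kills `Q x` on those of `lam 0, …, lam (j - 1)`.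
Together these are `n - 1` linear conditions, so a nonzero solution exists. -/
theorem exists_ne_zero_mulVec_window {p q : ℕ} (P Q : Matrix (Fin (p + q)) (Fin (p + q)) ℂ)
    (j : Fin p) : ∃ x : Fin (p + q) → ℂ, x ≠ 0 ∧
      (∀ i : Fin (p + q), ¬((i : ℕ) < p ∧ p ≤ (j : ℕ) + i + 1) → (P *ᵥ x) i = 0) ∧
      ∀ i : Fin (p + q), (i : ℕ) < p → p ≤ (j : ℕ) + i → (Q *ᵥ x) i = 0 := by
  let S := Finset.univ.filter fun i : Fin (p + q) => ¬((i : ℕ) < p ∧ p ≤ (j : ℕ) + i + 1)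
  let T := Finset.univ.filter fun i : Fin (p + q) => (i : ℕ) < p ∧ p ≤ (j : ℕ) + i
  have hST : Disjoint S T := by
    simp only [S, T, Finset.disjoint_filter]
    omega
  have hcard : S.card + T.card < Fintype.card (Fin (p + q)) := by
    rw [← Finset.card_union_of_disjoint hST]
    refine Finset.card_lt_univ_of_notMem (x := ⟨p - 1 - j, by omega⟩) ?_
    simp only [S, T, Finset.mem_union, Finset.mem_filter]
    omega
  obtain ⟨x, hx0, hP, hQ⟩ := exists_ne_zero_mulVec_apply_eq_zero P Q hcard
  exact ⟨x, hx0, fun i hi => hP i (by simpa [S] using hi),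
    fun i hi hij => hQ i (by simpa [T] using ⟨hi, hij⟩)⟩

/-- Weyl-type inequality for λ's: if `A`, `B`, and `C = A + B` are
admissible, then `λ_k(A+B) ≥ λ_k(A) + λ_1(B)` for `1 ≤ k ≤ p`. -/
theorem weyl_type_lambda
    (p q : ℕ) (hp : 0 < p) (hq : 0 < q)
    (A B : Matrix (Fin (p + q)) (Fin (p + q)) ℂ)
    (lamA : Fin p → ℝ) (muA : Fin q → ℝ)
    (lamB : Fin p → ℝ) (muB : Fin q → ℝ)
    (lamC : Fin p → ℝ) (muC : Fin q → ℝ)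
    (hA : IsAdmissible p q hp hq A lamA muA)
    (hB : IsAdmissible p q hp hq B lamB muB)
    (hC : IsAdmissible p q hp hq (A + B) lamC muC)
    (k : ℕ) (hk1 : 1 ≤ k) (hk2 : k ≤ p) :
    lamA ⟨k - 1, by omega⟩ + lamB ⟨0, hp⟩ ≤ lamC ⟨k - 1, by omega⟩ := by
  obtain ⟨-, hlamA, hmuA, hgapA, U, hU, hUJ, hUA⟩ := hA
  obtain ⟨-, hlamC, -, -, W, hW, hWJ, hWC⟩ := hC
  set j : Fin p := ⟨k - 1, by omega⟩
  obtain ⟨x, hx0, hxW, hxU⟩ := exists_ne_zero_mulVec_window W⁻¹ U⁻¹ j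
  have hxx : 0 < (pairing p q x x).re :=
    re_pairing_self_pos_of_inv_mulVec hW hWJ hx0 fun i hi => hxW i (by omega)
  have hAx := lam_mul_re_pairing_self_le hp hq hlamA hmuA hgapA hU hUJ hUA j hxU
  have hBx := hB.lam_zero_mul_re_pairing_self_le x
  have hCx := re_pairing_le_lam_mul_self hlamC hW hWJ hWC j hxW
  rw [add_mulVec, pairing_add_left, Complex.add_re] at hCx
  exact le_of_mul_le_mul_right (by linarith) hxx
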